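/- For every natural number n ≥ 1, H_n - (1/2)ln(n(n+1)) - γ > 0 and H_n - ln(n + 1/2) - γ > 0. -/

import Mathlib

/-!
The sequence `a n = H n - log (n + 1/2)` is strictly decreasing: `a n - a (n + 1)` equals
`log (1 + 1 / (n + 1/2)) - 1 / (n + 1)`, which is the tail of the series
`log (1 + 1/a) = ∑ 2 / ((2k+1) (2a+1)^(2k+1))` after its first term, hence positive.
Since `a n` is squeezed between `H n - log (n + 1)` and `H n - log n`, it tends to `γ`,
so `γ < a n`. The first inequality follows from the second by AM-GM,
`√(n (n+1)) < n + 1/2`.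
-/

open Real Filter

noncomputable def H (n : ℕ) : ℝ := ∑ i ∈ Finset.range n, (1 : ℝ) / (i + 1)

lemma H_eq_harmonic (n : ℕ) : H n = harmonic n := by
  simp [H, harmonic]

namespace Real

lemma two_div_two_mul_add_one_lt_log_one_add_inv {a : ℝ} (ha : 0 < a) :
    2 / (2 * a + 1) < log (1 + a⁻¹) := by
  have hpartial :=
    sum_le_hasSum (Finset.range 2) (fun k _ ↦ by positivity) (hasSum_log_one_add_inv ha)
  have hcube : 0 < ((2 * a + 1) ^ 3)⁻¹ := by positivity
  norm_num [Finset.sum_range_succ] at hpartial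
  rw [div_eq_mul_inv]
  linarith

lemma strictAnti_harmonic_sub_log_add_half :
    StrictAnti fun n : ℕ ↦ (harmonic n : ℝ) - log (n + 1 / 2) := by
  refine strictAnti_nat_of_succ_lt fun n ↦ ?_
  have hlog := two_div_two_mul_add_one_lt_log_one_add_inv (a := n + 1 / 2) (by positivity)
  have hsplit : log ((n : ℝ) + 1 + 1 / 2) = log (n + 1 / 2) + log (1 + (n + 1 / 2 : ℝ)⁻¹) := by
    rw [← log_mul (by positivity) (by positivity)]
    congr 1
    field_simp
    ring
  have hstep : 2 / (2 * ((n : ℝ) + 1 / 2) + 1) = ((n + 1 : ℕ) : ℝ)⁻¹ := by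
    push_cast
    field_simp
    ring
  rw [harmonic_succ]
  push_cast at hstep ⊢
  rw [hsplit]
  linarith

lemma tendsto_harmonic_sub_log_add_half :
    Tendsto (fun n : ℕ ↦ (harmonic n : ℝ) - log (n + 1 / 2)) atTop
      (nhds eulerMascheroniConstant) := by
  refine tendsto_of_tendsto_of_tendsto_of_le_of_le' tendsto_harmonic_sub_log_add_one
    tendsto_harmonic_sub_log ?_ ?_
  · exact Eventually.of_forall fun n ↦ by
      gcongr
      norm_num
  · filter_upwards [eventually_gt_atTop 0] with n hn
    gcongr
    norm_num

lemma eulerMascheroniConstant_lt_harmonic_sub_log_add_half (n : ℕ) :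
    eulerMascheroniConstant < harmonic n - log (n + 1 / 2) :=
  (strictAnti_harmonic_sub_log_add_half.antitone.le_of_tendsto
    tendsto_harmonic_sub_log_add_half (n + 1)).trans_lt
    (strictAnti_harmonic_sub_log_add_half n.lt_succ_self)

lemma half_mul_log_mul_add_one_lt_log_add_half {x : ℝ} (hx : 0 < x) :
    1 / 2 * log (x * (x + 1)) < log (x + 1 / 2) := by
  have hamgm : log (x * (x + 1)) < log ((x + 1 / 2) ^ 2) :=
    log_lt_log (by positivity) (by nlinarith)
  rw [log_pow] at hamgm
  push_cast at hamgm
  linarith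

end Real

theorem stmt19 (n : ℕ) (hn : 1 ≤ n) :
    0 < H n - (1 / 2) * Real.log (n * (n + 1)) - Real.eulerMascheroniConstant ∧
    0 < H n - Real.log (n + 1 / 2) - Real.eulerMascheroniConstant := by
  have hγ := Real.eulerMascheroniConstant_lt_harmonic_sub_log_add_half n
  have hamgm := Real.half_mul_log_mul_add_one_lt_log_add_half (x := n) (by exact_mod_cast hn)
  rw [H_eq_harmonic]
  constructor <;> linarith
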